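/- With Q as above, the off-diagonal block satisfies (Q - Q²)₁₂ = κ(B₊)(B₊ - B₋), and consequently ‖(Q - Q²)₁₂‖² ≤ ‖B₊ - B₋‖ · ‖(B₊ - B₊²)(B₊ - B₋)‖. -/

import Mathlib

open scoped Matrix.Norms.L2Operator ComplexOrder MatrixOrder

/-!
`K = κ(B₊)` is a continuous function of `B₊`, so it commutes with `B₊`; this collapses the
off-diagonal block of `Q - Q²` to `K (B₊ - B₋)`. Since the spectrum of `B₊` lies in `[0, 1]`, `K` is
selfadjoint with `K² = B₊ - B₊²`, and the C*-identity gives, with `D = B₊ - B₋`,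
`‖K D‖² = ‖D K² D‖ ≤ ‖D‖ ‖K² D‖`.
-/

theorem Matrix.toBlocks₁₂_sub_sq_fromBlocks {n α : Type*} [Fintype n] [DecidableEq n] [Ring α]
    {A B K : Matrix n n α} (h : Commute A K) :
    (fromBlocks (1 - A) K K B - fromBlocks (1 - A) K K B ^ 2).toBlocks₁₂ = K * (A - B) := by
  rw [sq, fromBlocks_multiply, sub_eq_add_neg, fromBlocks_neg, fromBlocks_add,
    toBlocks_fromBlocks₁₂, sub_mul, one_mul, h.eq, mul_sub]
  abel

theorem CStarRing.norm_mul_sq_le {A : Type*} [NormedRing A] [StarRing A] [CStarRing A] (x y : A) :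
    ‖x * y‖ ^ 2 ≤ ‖y‖ * ‖star x * x * y‖ :=
  calc ‖x * y‖ ^ 2 = ‖star y * (star x * x * y)‖ := by
        rw [sq, ← CStarRing.norm_star_mul_self, star_mul, mul_assoc, mul_assoc]
    _ ≤ ‖y‖ * ‖star x * x * y‖ := by
        simpa only [norm_star] using norm_mul_le (star y) (star x * x * y)

section CFC

variable {A : Type*} [Ring A] [StarRing A] [Algebra ℝ A] [TopologicalSpace A]
  [ContinuousFunctionalCalculus ℝ A IsSelfAdjoint] [PartialOrder A] [StarOrderedRing A]
  [NonnegSpectrumClass ℝ A]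

theorem spectrum_subset_Icc_of_nonneg_of_le_one {a : A} (ha₀ : 0 ≤ a) (ha₁ : a ≤ 1) :
    spectrum ℝ a ⊆ Set.Icc 0 1 :=
  fun x hx => ⟨spectrum_nonneg_of_nonneg ha₀ hx, (CFC.le_one_iff a).mp ha₁ x hx⟩

theorem cfc_sqrt_sub_sq_mul_self {a : A} (ha₀ : 0 ≤ a) (ha₁ : a ≤ 1) :
    cfc (fun t : ℝ => √(t - t ^ 2)) a * cfc (fun t : ℝ => √(t - t ^ 2)) a = a - a ^ 2 := by
  have hspec := spectrum_subset_Icc_of_nonneg_of_le_one ha₀ ha₁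
  calc _ = cfc (fun t : ℝ => t - t ^ 2) a := by
        rw [← cfc_mul ..]
        refine cfc_congr fun x hx => Real.mul_self_sqrt ?_
        obtain ⟨h₀, h₁⟩ := hspec hx
        nlinarith
    _ = a - a ^ 2 := by rw [cfc_sub .., cfc_id' ℝ a, cfc_pow_id a 2]

end CFC

theorem stmt_4_general {N : ℕ} (Bp Bm : Matrix (Fin N) (Fin N) ℂ)
    (hp0 : Bp.PosSemidef) (hp1 : (1 - Bp).PosSemidef)
    (K : Matrix (Fin N) (Fin N) ℂ)
    (hK : K = cfc (fun t : ℝ => Real.sqrt (t - t ^ 2)) Bp)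
    (Q : Matrix (Fin N ⊕ Fin N) (Fin N ⊕ Fin N) ℂ)
    (hQ : Q = Matrix.fromBlocks (1 - Bp) K K Bm) :
    (Q - Q ^ 2).toBlocks₁₂ = K * (Bp - Bm) ∧
    ‖(Q - Q ^ 2).toBlocks₁₂‖ ^ 2 ≤ ‖Bp - Bm‖ * ‖(Bp - Bp ^ 2) * (Bp - Bm)‖ := by
  have hBp₀ : 0 ≤ Bp := hp0.nonneg
  have hBp₁ : Bp ≤ 1 := Matrix.le_iff.mpr hp1
  have hblock : (Q - Q ^ 2).toBlocks₁₂ = K * (Bp - Bm) := by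
    rw [hQ, hK]
    exact Matrix.toBlocks₁₂_sub_sq_fromBlocks ((Commute.refl Bp).cfc_real _).symm
  refine ⟨hblock, hblock ▸ ?_⟩
  have hKK : star K * K = Bp - Bp ^ 2 := by
    rw [hK, (cfc_predicate _ Bp : IsSelfAdjoint _).star_eq, cfc_sqrt_sub_sq_mul_self hBp₀ hBp₁]
  simpa only [hKK] using CStarRing.norm_mul_sq_le K (Bp - Bm)

/-- The off-diagonal block of `Q - Q²` equals `κ(Bp)(Bp - Bm)`, and consequently
`‖(Q - Q²)₁₂‖² ≤ ‖Bp - Bm‖ · ‖(Bp - Bp²)(Bp - Bm)‖`. Here `κ(t) = √(t - t²)` is applied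
via the continuous functional calculus, and `Q` is the block matrix
`(1 - Bp, κ(Bp); κ(Bp), Bm)`. The norm is the `L²` operator norm. -/
theorem stmt_4 {N : ℕ} (Bp Bm : Matrix (Fin N) (Fin N) ℂ)
    (hp : IsSelfAdjoint Bp) (hm : IsSelfAdjoint Bm)
    (hp0 : Bp.PosSemidef) (hp1 : (1 - Bp).PosSemidef)
    (hm0 : Bm.PosSemidef) (hm1 : (1 - Bm).PosSemidef)
    (K : Matrix (Fin N) (Fin N) ℂ)
    (hK : K = cfc (fun t : ℝ => Real.sqrt (t - t ^ 2)) Bp)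
    (Q : Matrix (Fin N ⊕ Fin N) (Fin N ⊕ Fin N) ℂ)
    (hQ : Q = Matrix.fromBlocks (1 - Bp) K K Bm) :
    (Q - Q ^ 2).toBlocks₁₂ = K * (Bp - Bm) ∧
    ‖(Q - Q ^ 2).toBlocks₁₂‖ ^ 2 ≤ ‖Bp - Bm‖ * ‖(Bp - Bp ^ 2) * (Bp - Bm)‖ :=
  stmt_4_general Bp Bm hp0 hp1 K hK Q hQ
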